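/- arXiv:1207.6200 — 3 statements merged into one kernel-verified Lean document; each statement's English description precedes it below -/
import Mathlib

section
/- Let K ⊆ L ⊆ M be languages over an alphabet E with uncontrollable events E_u ⊆ E. If K is controllable with respect to \overline{L} and E_u, and L is controllable with respect to \overline{M} and E_u, then K is controllable with respect to \overline{M} and E_u (transitivity of controllability). -/
open scoped Classical

/-- Natural projection: erase letters not in `A`. -/
noncomputable def proj {Ev : Type*} (A : Set Ev) (w : List Ev) : List Ev :=
  w.filter (fun a => decide (a ∈ A))

/-- Projection of a language. -/
noncomputable def projL {Ev : Type*} (A : Set Ev) (L : Set (List Ev)) : Set (List Ev) :=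
  proj A '' L

/-- Words over an alphabet `A`, i.e., `A*`. -/
def star {Ev : Type*} (A : Set Ev) : Set (List Ev) := {w | ∀ a ∈ w, a ∈ A}

/-- Synchronous product of `L₁ ⊆ A*` and `L₂ ⊆ B*`. -/
noncomputable def sync {Ev : Type*} (A B : Set Ev) (L1 L2 : Set (List Ev)) :
    Set (List Ev) :=
  {w | w ∈ star (A ∪ B) ∧ proj A w ∈ L1 ∧ proj B w ∈ L2}

/-- Prefix closure of a language. -/
def prefixCl {Ev : Type*} (L : Set (List Ev)) : Set (List Ev) := {w | ∃ v, w ++ v ∈ L}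

/-- Controllability of `K` with respect to (prefix-closed) `L` and uncontrollable events `Eu`. -/
def controllable {Ev : Type*} (K L : Set (List Ev)) (Eu : Set Ev) : Prop :=
  ∀ s ∈ prefixCl K, ∀ u ∈ Eu, s ++ [u] ∈ L → s ++ [u] ∈ prefixCl K

/-- Supremal controllable sublanguage of `K` w.r.t. `N` and `U`. -/
noncomputable def supC {Ev : Type*} (K N : Set (List Ev)) (U : Set Ev) : Set (List Ev) :=
  ⋃₀ {M | M ⊆ K ∧ controllable M N U}

/-- `proj A` is an `L`-observer. -/
def observer {Ev : Type*} (A : Set Ev) (L : Set (List Ev)) : Prop :=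
  ∀ t ∈ projL A L, ∀ s ∈ prefixCl L, proj A s <+: t →
    ∃ u, s ++ u ∈ L ∧ proj A (s ++ u) = t

/-- `proj A` is locally control consistent (LCC) for `L` (w.r.t. uncontrollable events `Eu`). -/
def lcc {Ev : Type*} (A Eu : Set Ev) (L : Set (List Ev)) : Prop :=
  ∀ s ∈ L, ∀ σ ∈ A ∩ Eu, proj A s ++ [σ] ∈ projL A L →
    (∃ u, (∀ a ∈ u, a ∉ A) ∧ s ++ u ++ [σ] ∈ L) →
    ∃ u, (∀ a ∈ u, a ∈ Eu ∧ a ∉ A) ∧ s ++ u ++ [σ] ∈ L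

theorem prefixCl_mono {Ev : Type*} {K L : Set (List Ev)} (h : K ⊆ L) :
    prefixCl K ⊆ prefixCl L :=
  fun _ ⟨v, hv⟩ => ⟨v, h hv⟩

theorem stmt2_general {Ev : Type*} (K L M : Set (List Ev)) (Eu : Set Ev)
    (hKL : K ⊆ L)
    (h1 : controllable K (prefixCl L) Eu)
    (h2 : controllable L (prefixCl M) Eu) :
    controllable K (prefixCl M) Eu :=
  fun s hs u hu hsM => h1 s hs u hu (h2 s (prefixCl_mono hKL hs) u hu hsM)

/-- transitivity of controllability. -/
theorem stmt2 {Ev : Type*} (K L M : Set (List Ev)) (Eu : Set Ev)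
    (hKL : K ⊆ L) (hLM : L ⊆ M)
    (h1 : controllable K (prefixCl L) Eu)
    (h2 : controllable L (prefixCl M) Eu) :
    controllable K (prefixCl M) Eu :=
  stmt2_general K L M Eu hKL h1 h2
end

section
/- Let E₁, E₂ ⊆ E with E₁ ∩ E₂ ⊆ E_k ⊆ E, and let P_k : E* → E_k* be the natural projection. Then for any languages L₁ ⊆ E₁* and L₂ ⊆ E₂*, P_k(L₁ ∥ L₂) = P_k(L₁) ∥ P_k(L₂). -/
/-! The inclusion `⊆` holds for any alphabets. For `⊇`, given `w` with
`P_{E₁∩E_k} w = P_k x₁` and `P_{E₂∩E_k} w = P_k x₂`, build a common lift `v` of `x₁, x₂`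
letter by letter along `w`: before each letter `c` of `w`, insert the `E_k`-free blocks of
`x₁` and `x₂` that precede `c` in them. Since `E₁ ∩ E₂ ⊆ E_k`, a letter outside `E_k` is
private to one component and is erased by the other projection, so the blocks do not interfere. -/

open scoped Classical

section Projection

variable {Ev : Type*} {A B K : Set Ev} {a : Ev} {l l₁ l₂ : List Ev}

theorem proj_append (A : Set Ev) (l₁ l₂ : List Ev) :
    proj A (l₁ ++ l₂) = proj A l₁ ++ proj A l₂ :=
  List.filter_append l₁ l₂

theorem mem_proj : a ∈ proj A l ↔ a ∈ l ∧ a ∈ A := by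
  simp [proj]

theorem proj_eq_nil_iff : proj A l = [] ↔ ∀ a ∈ l, a ∉ A := by
  simp [proj]

theorem proj_eq_self (hl : l ∈ star A) : proj A l = l :=
  List.filter_eq_self.2 fun a ha => by simpa using hl a ha

theorem proj_proj (A B : Set Ev) (l : List Ev) : proj A (proj B l) = proj (A ∩ B) l := by
  simp only [proj, List.filter_filter, Set.mem_inter_iff, Bool.decide_and]

theorem star_append : l₁ ++ l₂ ∈ star A ↔ l₁ ∈ star A ∧ l₂ ∈ star A :=
  List.forall_mem_append

theorem star_cons : a :: l ∈ star A ↔ a ∈ A ∧ l ∈ star A :=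
  List.forall_mem_cons

theorem proj_star_subset (A B : Set Ev) : proj B '' star A ⊆ star (A ∩ B) := by
  rintro _ ⟨l, hl, rfl⟩ a ha
  obtain ⟨hal, haB⟩ := mem_proj.1 ha
  exact ⟨hl a hal, haB⟩

theorem proj_eq_nil_of_inter_subset (hAB : A ∩ B ⊆ K) (hl : l ∈ star A)
    (hK : proj K l = []) : proj B l = [] :=
  proj_eq_nil_iff.2 fun a ha haB => proj_eq_nil_iff.1 hK a ha (hAB ⟨hl a ha, haB⟩)

/-- `proj A [c]` is the letter of `x` matched by `c` when `c ∈ A`, and empty otherwise. -/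
theorem exists_split_of_proj_eq_proj_cons {c : Ev} {x w : List Ev} (hc : c ∈ K)
    (h : proj K x = proj (A ∩ K) (c :: w)) :
    ∃ u x', x = u ++ proj A [c] ++ x' ∧ proj K u = [] ∧ proj K x' = proj (A ∩ K) w := by
  by_cases hcA : c ∈ A
  · have hcons : proj (A ∩ K) (c :: w) = c :: proj (A ∩ K) w := by
      simp [proj, hcA, hc]
    rw [hcons, proj, List.filter_eq_cons_iff] at h
    obtain ⟨u, x', rfl, hu, -, hx'⟩ := h
    refine ⟨u, x', by simp [proj, hcA], proj_eq_nil_iff.2 fun a ha => ?_, hx'⟩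
    simpa using hu a ha
  · refine ⟨[], x, by simp [proj, hcA], rfl, ?_⟩
    simpa [proj, hcA] using h

end Projection

section Merge

variable {Ev : Type*} {E1 E2 Ek : Set Ev}

theorem proj_append_of_proj_eq_nil (hshared : E1 ∩ E2 ⊆ Ek) {u1 u2 : List Ev}
    (hu1 : u1 ∈ star E1) (hu2 : u2 ∈ star E2) (hk1 : proj Ek u1 = []) (hk2 : proj Ek u2 = []) :
    u1 ++ u2 ∈ star (E1 ∪ E2) ∧ proj E1 (u1 ++ u2) = u1 ∧ proj E2 (u1 ++ u2) = u2 ∧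
      proj Ek (u1 ++ u2) = [] := by
  have h21 : proj E1 u2 = [] :=
    proj_eq_nil_of_inter_subset (Set.inter_comm E2 E1 ▸ hshared) hu2 hk2
  have h12 : proj E2 u1 = [] := proj_eq_nil_of_inter_subset hshared hu1 hk1
  refine ⟨star_append.2 ⟨fun a ha => Or.inl (hu1 a ha), fun a ha => Or.inr (hu2 a ha)⟩, ?_⟩
  simp [proj_append, proj_eq_self hu1, proj_eq_self hu2, h12, h21, hk1, hk2]

theorem exists_lift_of_proj_eq (hshared : E1 ∩ E2 ⊆ Ek) {w : List Ev}
    (hw : w ∈ star (E1 ∩ Ek ∪ E2 ∩ Ek)) {x1 x2 : List Ev}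
    (hx1 : x1 ∈ star E1) (hx2 : x2 ∈ star E2)
    (h1 : proj Ek x1 = proj (E1 ∩ Ek) w) (h2 : proj Ek x2 = proj (E2 ∩ Ek) w) :
    ∃ v ∈ star (E1 ∪ E2), proj E1 v = x1 ∧ proj E2 v = x2 ∧ proj Ek v = w := by
  induction w generalizing x1 x2 with
  | nil =>
    obtain ⟨hv, hv1, hv2, hvk⟩ := proj_append_of_proj_eq_nil hshared hx1 hx2 h1 h2
    exact ⟨x1 ++ x2, hv, hv1, hv2, hvk⟩
  | cons c w ih =>
    obtain ⟨hcw, hw⟩ := star_cons.1 hw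
    have hck : c ∈ Ek := hcw.elim And.right And.right
    obtain ⟨u1, y1, rfl, hk1, hy1⟩ := exists_split_of_proj_eq_proj_cons hck h1
    obtain ⟨u2, y2, rfl, hk2, hy2⟩ := exists_split_of_proj_eq_proj_cons hck h2
    obtain ⟨⟨hu1, -⟩, hy1s⟩ := star_append.1 hx1 |>.imp_left star_append.1
    obtain ⟨⟨hu2, -⟩, hy2s⟩ := star_append.1 hx2 |>.imp_left star_append.1
    obtain ⟨v, hv, hv1, hv2, hvk⟩ := ih hw hy1s hy2s hy1 hy2
    obtain ⟨hu, hu1', hu2', huk⟩ := proj_append_of_proj_eq_nil hshared hu1 hu2 hk1 hk2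
    refine ⟨u1 ++ u2 ++ [c] ++ v, ?_, ?_, ?_, ?_⟩
    · refine star_append.2 ⟨star_append.2 ⟨hu, star_cons.2 ⟨?_, List.forall_mem_nil _⟩⟩, hv⟩
      exact hcw.imp And.left And.left
    · simp only [proj_append, hu1', hv1]
    · simp only [proj_append, hu2', hv2]
    · rw [proj_append, proj_append, huk, hvk]
      simp [proj, hck]

end Merge

theorem projL_sync_subset {Ev : Type*} (E1 E2 Ek : Set Ev) (L1 L2 : Set (List Ev)) :
    projL Ek (sync E1 E2 L1 L2) ⊆ sync (E1 ∩ Ek) (E2 ∩ Ek) (projL Ek L1) (projL Ek L2) := by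
  rintro _ ⟨v, ⟨hv, hv1, hv2⟩, rfl⟩
  refine ⟨?_, ⟨proj E1 v, hv1, ?_⟩, ⟨proj E2 v, hv2, ?_⟩⟩
  · simpa only [Set.union_inter_distrib_right] using proj_star_subset _ Ek ⟨v, hv, rfl⟩
  · rw [proj_proj, proj_proj, Set.inter_assoc, Set.inter_self, Set.inter_comm]
  · rw [proj_proj, proj_proj, Set.inter_assoc, Set.inter_self, Set.inter_comm]

theorem stmt3_general {Ev : Type*} (E1 E2 Ek : Set Ev) (hshared : E1 ∩ E2 ⊆ Ek)
    (L1 L2 : Set (List Ev)) (hL1 : L1 ⊆ star E1) (hL2 : L2 ⊆ star E2) :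
    projL Ek (sync E1 E2 L1 L2) =
      sync (E1 ∩ Ek) (E2 ∩ Ek) (projL Ek L1) (projL Ek L2) := by
  refine (projL_sync_subset E1 E2 Ek L1 L2).antisymm ?_
  rintro w ⟨hw, ⟨x1, hx1, h1⟩, ⟨x2, hx2, h2⟩⟩
  obtain ⟨v, hv, hv1, hv2, hvk⟩ :=
    exists_lift_of_proj_eq hshared hw (hL1 hx1) (hL2 hx2) h1 h2
  exact ⟨v, ⟨hv, hv1 ▸ hx1, hv2 ▸ hx2⟩, hvk⟩

/-- the projection distributes over the synchronous product when the
shared alphabet is contained in the projection alphabet. -/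
theorem stmt3 {Ev : Type*} (E E1 E2 Ek : Set Ev)
    (hE1 : E1 ⊆ E) (hE2 : E2 ⊆ E) (hEk : Ek ⊆ E) (hshared : E1 ∩ E2 ⊆ Ek)
    (L1 L2 : Set (List Ev)) (hL1 : L1 ⊆ star E1) (hL2 : L2 ⊆ star E2) :
    projL Ek (sync E1 E2 L1 L2) =
      sync (E1 ∩ Ek) (E2 ∩ Ek) (projL Ek L1) (projL Ek L2) :=
  stmt3_general E1 E2 Ek hshared L1 L2 hL1 hL2
end

section
/- Let L₁ ⊆ E₁* and L₂ ⊆ E₂* be prefix-closed languages, and let K_i ⊆ L_i be controllable with respect to L_i and E_{i,u} = E_i ∩ E_u for i = 1,2, where E = E₁ ∪ E₂. If K₁ and K₂ are synchronously nonconflicting (i.e., \overline{K₁ ∥ K₂} = \overline{K₁} ∥ \overline{K₂}), then K₁ ∥ K₂ is controllable with respect to L₁ ∥ L₂ and E_u. -/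
open scoped Classical

theorem proj_append_singleton_of_mem {Ev : Type*} {A : Set Ev} {a : Ev} (s : List Ev)
    (ha : a ∈ A) : proj A (s ++ [a]) = proj A s ++ [a] := by
  simp [proj, List.filter_append, ha]

theorem proj_append_singleton_of_notMem {Ev : Type*} {A : Set Ev} {a : Ev} (s : List Ev)
    (ha : a ∉ A) : proj A (s ++ [a]) = proj A s := by
  simp [proj, List.filter_append, ha]

theorem controllable.proj_append_singleton_mem_prefixCl {Ev : Type*} {A Eu : Set Ev}
    {K L : Set (List Ev)} (hc : controllable K L (A ∩ Eu)) {s : List Ev} {u : Ev}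
    (hs : proj A s ∈ prefixCl K) (hu : u ∈ Eu) (hsu : proj A (s ++ [u]) ∈ L) :
    proj A (s ++ [u]) ∈ prefixCl K := by
  by_cases hA : u ∈ A
  · rw [proj_append_singleton_of_mem s hA] at hsu ⊢
    exact hc _ hs u ⟨hA, hu⟩ hsu
  · rwa [proj_append_singleton_of_notMem s hA]

theorem stmt5_general {Ev : Type*} (E1 E2 Eu : Set Ev) (L1 L2 K1 K2 : Set (List Ev))
    (hc1 : controllable K1 L1 (E1 ∩ Eu))
    (hc2 : controllable K2 L2 (E2 ∩ Eu))
    (hnc : prefixCl (sync E1 E2 K1 K2) = sync E1 E2 (prefixCl K1) (prefixCl K2)) :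
    controllable (sync E1 E2 K1 K2) (sync E1 E2 L1 L2) Eu := by
  intro s hs u hu ⟨hsu, hsu1, hsu2⟩
  rw [hnc] at hs ⊢
  exact ⟨hsu, hc1.proj_append_singleton_mem_prefixCl hs.2.1 hu hsu1,
    hc2.proj_append_singleton_mem_prefixCl hs.2.2 hu hsu2⟩

/-- controllability is preserved under synchronous composition of
synchronously nonconflicting languages. -/
theorem stmt5 {Ev : Type*} (E1 E2 Eu : Set Ev) (L1 L2 K1 K2 : Set (List Ev))
    (hL1 : L1 ⊆ star E1) (hL2 : L2 ⊆ star E2)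
    (hL1c : prefixCl L1 = L1) (hL2c : prefixCl L2 = L2)
    (hK1 : K1 ⊆ L1) (hK2 : K2 ⊆ L2)
    (hc1 : controllable K1 L1 (E1 ∩ Eu))
    (hc2 : controllable K2 L2 (E2 ∩ Eu))
    (hnc : prefixCl (sync E1 E2 K1 K2) = sync E1 E2 (prefixCl K1) (prefixCl K2)) :
    controllable (sync E1 E2 K1 K2) (sync E1 E2 L1 L2) Eu :=
  stmt5_general E1 E2 Eu L1 L2 K1 K2 hc1 hc2 hnc
end
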